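/- arXiv:1010.2896 — 4 statements merged into one kernel-verified Lean document; each statement's English description precedes it below -/
import Mathlib

section
/- Let A be a commutative monoid with zero and S ⊆ A a multiplicative subset with U_S nonempty (i.e., 0 ∉ S is not forced but some prime ideal avoids S). Then there is a prime ideal m in U_S containing all ideals of A that do not intersect S; in particular m contains all other prime ideals in U_S, and S⁻¹A ≅ A_m. -/
/-- An ideal of a commutative monoid with zero: a nonempty subset `I` with `I·A ⊆ I`. -/
def IsMonIdeal {A : Type*} [CommMonoidWithZero A] (I : Set A) : Prop :=
  I.Nonempty ∧ ∀ a ∈ I, ∀ b : A, a * b ∈ I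

/-- A prime ideal of a commutative monoid with zero. -/
def IsMonPrimeIdeal {A : Type*} [CommMonoidWithZero A] (p : Set A) : Prop :=
  IsMonIdeal p ∧ 1 ∉ p ∧ ∀ a b : A, a * b ∈ p → a ∈ p ∨ b ∈ p

/-- The complement of a prime ideal of a monoid, as a submonoid. -/
def monPrimeCompl {A : Type*} [CommMonoidWithZero A] {p : Set A}
    (hp : IsMonPrimeIdeal p) : Submonoid A where
  carrier := pᶜ
  one_mem' := hp.2.1
  mul_mem' := fun ha hb hab => (hp.2.2 _ _ hab).elim ha hb

/-! The ideal `m` is the complement of the saturation `{a | ∃ b, a * b ∈ S}` of `S`: an ideal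
avoiding `S` cannot contain a divisor of an element of `S`, and inverting `S` already inverts
every such divisor, so `S⁻¹A` is the localization at the saturation, i.e. `A_m`. -/

namespace Submonoid.IsLocalizationMap

variable {M N F : Type*} [CommMonoid M] [CommMonoid N] [FunLike F M N] [MulHomClass F M N]
  {S T : Submonoid M} {f : F}

theorem of_le_saturation (hf : IsLocalizationMap S f) (hST : S ≤ T)
    (hT : T ≤ S.saturation.toSubmonoid) : IsLocalizationMap T f where
  map_units t := by
    obtain ⟨b, hb⟩ := Submonoid.mem_saturation_iff.mp (hT t.2)
    have hunit : IsUnit (f t * f b) := map_mul f (t : M) b ▸ hf.map_units ⟨_, hb⟩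
    exact isUnit_of_mul_isUnit_left hunit
  surj z := by
    obtain ⟨⟨a, s⟩, hs⟩ := hf.surj z
    exact ⟨⟨a, ⟨s, hST s.2⟩⟩, hs⟩
  exists_of_eq hxy := by
    obtain ⟨c, hc⟩ := hf.exists_of_eq hxy
    exact ⟨⟨c, hST c.2⟩, hc⟩

end Submonoid.IsLocalizationMap

namespace Localization

variable {M : Type*} [CommMonoid M] {S T : Submonoid M}

noncomputable def mulEquivOfLESaturation (hST : S ≤ T) (hT : T ≤ S.saturation.toSubmonoid) :
    Localization S ≃* Localization T :=
  Submonoid.LocalizationMap.mulEquivOfLocalizations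
    ⟨(monoidOf S).toMulHom,
      (monoidOf S).isLocalizationMap.of_le_saturation (f := (monoidOf S).toMulHom) hST hT⟩
    (monoidOf T)

@[simp]
theorem mulEquivOfLESaturation_mk_one (hST : S ≤ T) (hT : T ≤ S.saturation.toSubmonoid) (a : M) :
    mulEquivOfLESaturation hST hT (mk a 1) = mk a 1 :=
  Submonoid.LocalizationMap.lift_eq _ (monoidOf T).map_units a

end Localization

section MonoidIdeals

variable {A : Type*} [CommMonoidWithZero A] {S : Submonoid A}

theorem IsMonIdeal.zero_mem {I : Set A} (hI : IsMonIdeal I) : (0 : A) ∈ I := by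
  obtain ⟨a, ha⟩ := hI.1
  simpa using hI.2 a ha 0

theorem IsMonIdeal.zero_notMem_of_inter_eq_empty {I : Set A} (hI : IsMonIdeal I)
    (hIS : I ∩ S = ∅) : (0 : A) ∉ S :=
  fun h0 => hIS.subset ⟨hI.zero_mem, h0⟩

theorem IsMonIdeal.subset_compl_saturation {I : Set A} (hI : IsMonIdeal I) (hIS : I ∩ S = ∅) :
    I ⊆ (S.saturation : Set A)ᶜ := fun a ha hsat => by
  obtain ⟨b, hb⟩ := Submonoid.mem_saturation_iff.mp hsat
  exact hIS.subset ⟨hI.2 a ha b, hb⟩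

theorem compl_saturation_inter_eq_empty : (S.saturation : Set A)ᶜ ∩ S = ∅ :=
  Set.eq_empty_of_forall_notMem fun _ ⟨hsat, hS⟩ => hsat (Submonoid.le_toSubmonoid_saturation hS)

theorem isMonPrimeIdeal_compl_saturation (h0 : (0 : A) ∉ S) :
    IsMonPrimeIdeal (S.saturation : Set A)ᶜ := by
  refine ⟨⟨⟨0, fun hsat => ?_⟩, fun a ha b hab => ha (S.saturation.mulSaturated hab).1⟩,
    fun h1 => h1 (one_mem _), fun a b hab => ?_⟩
  · obtain ⟨b, hb⟩ := Submonoid.mem_saturation_iff.mp hsat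
    exact h0 (zero_mul b ▸ hb)
  · by_contra! h
    exact hab (mul_mem (not_not.mp h.1) (not_not.mp h.2))

end MonoidIdeals

/-- If some prime ideal of `A` is disjoint from the multiplicative set `S`, then there is
a prime ideal `m` disjoint from `S` containing every ideal disjoint from `S` (in particular
every prime of `U_S`), and the localization `S⁻¹A` coincides with the localization `A_m`
at `m` (via the canonical identification fixing the images of elements of `A`). -/
theorem exists_maximal_prime_avoiding_and_loc_eq {A : Type*} [CommMonoidWithZero A]
    (S : Submonoid A) (hUS : ∃ p : Set A, IsMonPrimeIdeal p ∧ p ∩ ↑S = ∅) :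
    ∃ (m : Set A) (hm : IsMonPrimeIdeal m), m ∩ ↑S = ∅ ∧
      (∀ I : Set A, IsMonIdeal I → I ∩ ↑S = ∅ → I ⊆ m) ∧
      (∀ p : Set A, IsMonPrimeIdeal p → p ∩ ↑S = ∅ → p ⊆ m) ∧
      ∃ e : Localization S ≃* Localization (monPrimeCompl hm),
        ∀ a : A, e (Localization.mk a 1) = Localization.mk a 1 := by
  obtain ⟨p, hp, hpS⟩ := hUS
  have hm := isMonPrimeIdeal_compl_saturation (hp.1.zero_notMem_of_inter_eq_empty hpS)
  have hS : S ≤ monPrimeCompl hm := fun _ hs hsat => hsat (Submonoid.le_toSubmonoid_saturation hs)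
  have hsat : monPrimeCompl hm ≤ S.saturation.toSubmonoid := fun _ ha => not_not.mp ha
  exact ⟨_, hm, compl_saturation_inter_eq_empty,
    fun _ hI => hI.subset_compl_saturation,
    fun _ hq => hq.1.subset_compl_saturation,
    Localization.mulEquivOfLESaturation hS hsat,
    Localization.mulEquivOfLESaturation_mk_one hS hsat⟩
end

section
/- Let A be a commutative monoid with zero generated by a subset Γ. Then every prime ideal of A is generated (as an ideal) by a subset of Γ. Consequently, if Γ is finite, every prime ideal of A is finitely generated and A has only finitely many prime ideals. -/
/-- `Γ` generates the monoid `A`: every element other than `0` and `1` is a (nonempty)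
product of elements of `Γ`. -/
def GeneratesMonoid {A : Type*} [CommMonoidWithZero A] (Γ : Set A) : Prop :=
  ∀ a : A, a ≠ 0 → a ≠ 1 → ∃ l : List A, l ≠ [] ∧ (∀ x ∈ l, x ∈ Γ) ∧ l.prod = a

/-- `I` is the ideal generated by `Γ'`: the smallest ideal containing `Γ'`. -/
def IdealGeneratedBy {A : Type*} [CommMonoidWithZero A] (Γ' I : Set A) : Prop :=
  IsMonIdeal I ∧ Γ' ⊆ I ∧ ∀ J : Set A, IsMonIdeal J → Γ' ⊆ J → I ⊆ J

lemma zero_mem_monIdeal {A : Type*} [CommMonoidWithZero A] {J : Set A}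
    (hJ : IsMonIdeal J) : (0 : A) ∈ J := by
  obtain ⟨b, hb⟩ := hJ.1
  have := hJ.2 b hb 0
  simpa using this

lemma prod_mem_aux {A : Type*} [CommMonoidWithZero A] {Γ p J : Set A}
    (hp : IsMonPrimeIdeal p) (hJ : IsMonIdeal J) (hsub : Γ ∩ p ⊆ J) :
    ∀ l : List A, (∀ x ∈ l, x ∈ Γ) → l.prod ∈ p → l.prod ∈ J := by
  intro l
  induction l with
  | nil => intro _ h; exact absurd h hp.2.1
  | cons h t ih =>
    intro hmem hprod
    simp only [List.prod_cons] at hprod ⊢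
    rcases hp.2.2 _ _ hprod with hh | ht
    · exact hJ.2 h (hsub ⟨hmem h (by simp), hh⟩) t.prod
    · have := hJ.2 t.prod (ih (fun x hx => hmem x (by simp [hx])) ht) h
      rwa [mul_comm] at this

lemma key {A : Type*} [CommMonoidWithZero A] {Γ : Set A} (hΓ : GeneratesMonoid Γ)
    {p : Set A} (hp : IsMonPrimeIdeal p) : IdealGeneratedBy (Γ ∩ p) p := by
  refine ⟨hp.1, Set.inter_subset_right, fun J hJ hsub a ha => ?_⟩
  by_cases h0 : a = 0
  · rw [h0]; exact zero_mem_monIdeal hJ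
  by_cases h1 : a = 1
  · exact absurd (h1 ▸ ha) hp.2.1
  obtain ⟨l, -, hl, hprod⟩ := hΓ a h0 h1
  rw [← hprod] at ha ⊢
  exact prod_mem_aux hp hJ hsub l hl ha

/-- If `Γ` generates the monoid `A`, then every prime ideal of `A` is generated by a
subset of `Γ`; if moreover `Γ` is finite, then every prime ideal is finitely generated
and `A` has only finitely many prime ideals. -/
theorem prime_ideal_generated_by_subset_of_generators {A : Type*} [CommMonoidWithZero A]
    (Γ : Set A) (hΓ : GeneratesMonoid Γ) :
    (∀ p : Set A, IsMonPrimeIdeal p → ∃ Γ' : Set A, Γ' ⊆ Γ ∧ IdealGeneratedBy Γ' p) ∧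
    (Γ.Finite →
      (∀ p : Set A, IsMonPrimeIdeal p →
        ∃ Γ'' : Set A, Γ''.Finite ∧ IdealGeneratedBy Γ'' p) ∧
      {p : Set A | IsMonPrimeIdeal p}.Finite) := by
  refine ⟨fun p hp => ⟨Γ ∩ p, Set.inter_subset_left, key hΓ hp⟩, fun hfin => ⟨?_, ?_⟩⟩
  · exact fun p hp => ⟨Γ ∩ p, hfin.inter_of_left p, key hΓ hp⟩
  · have hinj : Set.InjOn (fun p => Γ ∩ p) {p : Set A | IsMonPrimeIdeal p} := by
      intro p hp q hq h
      simp only at h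
      have h1 := (key hΓ hp).2.2 q hq.1 (h ▸ Set.inter_subset_right)
      have h2 := (key hΓ hq).2.2 p hp.1 (h ▸ Set.inter_subset_right)
      exact le_antisymm h1 h2
    have himg : (fun p => Γ ∩ p) '' {p : Set A | IsMonPrimeIdeal p} ⊆ {t | t ⊆ Γ} := by
      rintro _ ⟨p, -, rfl⟩; exact Set.inter_subset_left
    exact Set.Finite.of_finite_image (hfin.finite_subsets.subset himg) hinj
end

section
/- Let A be a finitely generated commutative monoid with zero. Then for every multiplicative subset S of A there is an element f ∈ A such that the set of prime ideals disjoint from S equals the set of prime ideals not containing f. -/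
/-- A finitely generated commutative monoid with zero. -/
def MonoidFG (A : Type*) [CommMonoidWithZero A] : Prop :=
  ∃ Γ : Finset A, GeneratesMonoid (↑Γ : Set A)

/-! A prime `p` avoids `S` iff it avoids every generator dividing an element of `S`, since `p` is
upward closed under divisibility and its complement is a submonoid. With finitely many generators,
their product `f` then satisfies `U_S = D_f`; if `0 ∈ S` take `f = 0`. -/

section

variable {A : Type*} [CommMonoidWithZero A]

theorem IsMonIdeal.mem_of_dvd {I : Set A} (hI : IsMonIdeal I) {a b : A} (ha : a ∈ I)
    (hab : a ∣ b) : b ∈ I := by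
  obtain ⟨c, rfl⟩ := hab
  exact hI.2 a ha c

namespace IsMonPrimeIdeal

variable {p : Set A}

theorem zero_mem (hp : IsMonPrimeIdeal p) : (0 : A) ∈ p := by
  obtain ⟨a, ha⟩ := hp.1.1
  exact hp.1.mem_of_dvd ha (dvd_zero a)

def primeCompl (hp : IsMonPrimeIdeal p) : Submonoid A where
  carrier := pᶜ
  one_mem' := hp.2.1
  mul_mem' {a b} ha hb hab := (hp.2.2 a b hab).elim ha hb

theorem exists_mem_of_list_prod_mem (hp : IsMonPrimeIdeal p) {l : List A} (hl : l.prod ∈ p) :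
    ∃ x ∈ l, x ∈ p := by
  by_contra! h
  exact Submonoid.list_prod_mem hp.primeCompl h hl

theorem prod_notMem_iff (hp : IsMonPrimeIdeal p) {ι : Type*} (s : Finset ι) (g : ι → A) :
    ∏ i ∈ s, g i ∉ p ↔ ∀ i ∈ s, g i ∉ p :=
  ⟨fun h _ hi hgi => h (hp.1.mem_of_dvd hgi (Finset.dvd_prod_of_mem g hi)),
    Submonoid.prod_mem hp.primeCompl⟩

theorem inter_eq_empty_iff_of_generates (hp : IsMonPrimeIdeal p) {Γ : Set A}
    (hΓ : GeneratesMonoid Γ) {S : Submonoid A} (h0 : (0 : A) ∉ S) :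
    p ∩ S = ∅ ↔ ∀ γ ∈ Γ, (∃ s ∈ S, γ ∣ s) → γ ∉ p := by
  simp only [Set.eq_empty_iff_forall_notMem, Set.mem_inter_iff, not_and]
  constructor
  · rintro hS γ - ⟨s, hs, hγs⟩ hγ
    exact hS s (hp.1.mem_of_dvd hγ hγs) hs
  · intro hΓS x hx hxS
    have hx0 : x ≠ 0 := fun h => h0 (h ▸ hxS)
    have hx1 : x ≠ 1 := fun h => hp.2.1 (h ▸ hx)
    obtain ⟨l, -, hlΓ, rfl⟩ := hΓ x hx0 hx1
    obtain ⟨γ, hγl, hγ⟩ := hp.exists_mem_of_list_prod_mem hx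
    exact hΓS γ (hlΓ γ hγl) ⟨_, hxS, List.dvd_prod hγl⟩ hγ

end IsMonPrimeIdeal

end

/-- For a finitely generated monoid `A` and any multiplicative subset `S` there is an
`f ∈ A` such that `U_S = D_f`: the primes disjoint from `S` are exactly the primes not
containing `f`. -/
theorem exists_f_US_eq_Df {A : Type*} [CommMonoidWithZero A] (hA : MonoidFG A)
    (S : Submonoid A) :
    ∃ f : A, {p : Set A | IsMonPrimeIdeal p ∧ p ∩ ↑S = ∅} =
      {p : Set A | IsMonPrimeIdeal p ∧ f ∉ p} := by
  classical
  obtain ⟨Γ, hΓ⟩ := hA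
  by_cases h0 : (0 : A) ∈ S
  · refine ⟨0, Set.ext fun p => and_congr_right fun hp => ?_⟩
    have : p ∩ S ≠ ∅ := Set.nonempty_iff_ne_empty.mp ⟨0, hp.zero_mem, h0⟩
    simp [this, hp.zero_mem]
  · refine ⟨∏ γ ∈ Γ with ∃ s ∈ S, γ ∣ s, γ,
      Set.ext fun p => and_congr_right fun hp => ?_⟩
    rw [hp.prod_notMem_iff, hp.inter_eq_empty_iff_of_generates hΓ h0]
    simp only [Finset.mem_filter, Finset.mem_coe, and_imp]
end

section
/- In the category of A-sets over a commutative monoid A with zero, every monomorphism is normal (i.e., is a kernel of some morphism), and an epimorphism is normal (i.e., is a cokernel) if and only if every fibre other than the fibre of the basepoint contains at most one element. -/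
universe u

/-- An `A`-set over a commutative monoid with zero `A`: a pointed set with an `A`-action
such that `(ab).m = a.(b.m)`, `a.∗ = ∗`, `0.m = ∗` and `1.m = m`. -/
structure ASet (A : Type u) [CommMonoidWithZero A] : Type (u + 1) where
  carrier : Type u
  pt : carrier
  act : A → carrier → carrier
  act_mul : ∀ a b m, act (a * b) m = act a (act b m)
  act_pt : ∀ a, act a pt = pt
  zero_act : ∀ m, act 0 m = pt
  one_act : ∀ m, act 1 m = m

variable {A : Type u} [CommMonoidWithZero A]

/-- A morphism of `A`-sets: a basepoint-preserving `A`-equivariant map. -/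
structure ASetHom (M N : ASet A) where
  toFun : M.carrier → N.carrier
  map_pt : toFun M.pt = N.pt
  map_act : ∀ a m, toFun (M.act a m) = N.act a (toFun m)

namespace ASetHom

theorem ext {M N : ASet A} {f g : ASetHom M N} (h : ∀ m, f.toFun m = g.toFun m) :
    f = g := by
  cases f; cases g
  simp only [mk.injEq]
  exact funext h

/-- The identity morphism of `A`-sets. -/
def id (M : ASet A) : ASetHom M M := ⟨fun m => m, rfl, fun _ _ => rfl⟩

/-- Composition of morphisms of `A`-sets. -/
def comp {M N P : ASet A} (g : ASetHom N P) (f : ASetHom M N) : ASetHom M P :=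
  ⟨fun m => g.toFun (f.toFun m), by show g.toFun (f.toFun M.pt) = P.pt; rw [f.map_pt, g.map_pt],
    fun a m => by
      show g.toFun (f.toFun (M.act a m)) = P.act a (g.toFun (f.toFun m))
      rw [f.map_act, g.map_act]⟩

/-- Monomorphism in the category of `A`-sets. -/
def IsMono {M N : ASet A} (f : ASetHom M N) : Prop :=
  ∀ (P : ASet A) (g h : ASetHom P M), f.comp g = f.comp h → g = h

/-- Epimorphism in the category of `A`-sets. -/
def IsEpi {M N : ASet A} (f : ASetHom M N) : Prop :=
  ∀ (P : ASet A) (g h : ASetHom N P), g.comp f = h.comp f → g = h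

/-- Isomorphism in the category of `A`-sets. -/
def IsIso {M N : ASet A} (f : ASetHom M N) : Prop :=
  ∃ g : ASetHom N M, g.comp f = id M ∧ f.comp g = id N

/-- A morphism of `A`-sets is normal if each fibre over a non-basepoint element
contains at most one element. -/
def IsNormal {M N : ASet A} (f : ASetHom M N) : Prop :=
  ∀ m m', f.toFun m = f.toFun m' → f.toFun m ≠ N.pt → m = m'

/-- The kernel of a morphism of `A`-sets: the preimage of the basepoint. -/
def kerSet {M N : ASet A} (f : ASetHom M N) : Set M.carrier :=
  {m | f.toFun m = N.pt}

end ASetHom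

namespace ASet

/-- The sub-`A`-set determined by a subset stable under the action and containing the
basepoint. -/
def sub (M : ASet A) (S : Set M.carrier) (hpt : M.pt ∈ S)
    (hact : ∀ a : A, ∀ m ∈ S, M.act a m ∈ S) : ASet A where
  carrier := ↥S
  pt := ⟨M.pt, hpt⟩
  act a m := ⟨M.act a m.1, hact a m.1 m.2⟩
  act_mul a b m := Subtype.ext (M.act_mul a b m.1)
  act_pt a := Subtype.ext (M.act_pt a)
  zero_act m := Subtype.ext (M.zero_act m.1)
  one_act m := Subtype.ext (M.one_act m.1)

/-- The relation collapsing the subset `S` to a point. -/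
def quotRel (M : ASet A) (S : Set M.carrier) : M.carrier → M.carrier → Prop :=
  fun m m' => m = m' ∨ (m ∈ S ∧ m' ∈ S)

/-- The quotient `A`-set `M/S` collapsing an action-stable subset `S` to the basepoint. -/
def quot (M : ASet A) (S : Set M.carrier)
    (hact : ∀ a : A, ∀ m ∈ S, M.act a m ∈ S) : ASet A where
  carrier := Quot (M.quotRel S)
  pt := Quot.mk _ M.pt
  act a := Quot.lift (fun m => Quot.mk _ (M.act a m)) (by
    rintro m m' (rfl | ⟨h1, h2⟩)
    · rfl
    · exact Quot.sound (Or.inr ⟨hact a m h1, hact a m' h2⟩))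
  act_mul a b q := Quot.inductionOn q fun m => by
    show Quot.mk _ (M.act (a * b) m) = Quot.mk _ (M.act a (M.act b m))
    rw [M.act_mul]
  act_pt a := by
    show Quot.mk _ (M.act a M.pt) = Quot.mk _ M.pt
    rw [M.act_pt]
  zero_act q := Quot.inductionOn q fun m => by
    show Quot.mk _ (M.act 0 m) = Quot.mk _ M.pt
    rw [M.zero_act]
  one_act q := Quot.inductionOn q fun m => by
    show Quot.mk _ (M.act 1 m) = Quot.mk _ m
    rw [M.one_act]

end ASet

namespace ASetHom

theorem kerSet_stable {M N : ASet A} (f : ASetHom M N) :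
    ∀ a : A, ∀ m ∈ f.kerSet, M.act a m ∈ f.kerSet := by
  intro a m hm
  show f.toFun (M.act a m) = N.pt
  rw [f.map_act, hm, N.act_pt]

/-- The image of a morphism of `A`-sets, as an `A`-set. -/
def imageASet {M N : ASet A} (f : ASetHom M N) : ASet A :=
  N.sub (Set.range f.toFun) ⟨M.pt, f.map_pt⟩
    (fun a n hn => by
      obtain ⟨m, rfl⟩ := hn
      exact ⟨M.act a m, f.map_act a m⟩)

/-- The coimage `M/ker f` of a morphism of `A`-sets. -/
def coimage {M N : ASet A} (f : ASetHom M N) : ASet A :=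
  M.quot f.kerSet f.kerSet_stable

/-- The canonical morphism `M/ker f → im f`. -/
def canonical {M N : ASet A} (f : ASetHom M N) : ASetHom f.coimage f.imageASet where
  toFun := Quot.lift (fun m => (⟨f.toFun m, ⟨m, rfl⟩⟩ : ↥(Set.range f.toFun))) (by
    rintro m m' (rfl | ⟨h1, h2⟩)
    · rfl
    · exact Subtype.ext (h1.trans h2.symm))
  map_pt := Subtype.ext f.map_pt
  map_act a q := Quot.inductionOn q fun m => Subtype.ext (f.map_act a m)

end ASetHom

namespace ASet

attribute [local instance] Classical.propDecidable

/-- `A` as an `A`-set over itself (basepoint `0`). -/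
def ofSelf (A : Type u) [CommMonoidWithZero A] : ASet A :=
  ⟨A, 0, (· * ·), mul_assoc, mul_zero, zero_mul, one_mul⟩

/-- The `A`-set `eA` for an element `e` of `A`. -/
def idem (A : Type u) [CommMonoidWithZero A] (e : A) : ASet A :=
  (ofSelf A).sub {x | ∃ a : A, x = e * a} ⟨0, (mul_zero e).symm⟩
    (fun a m hm => by
      obtain ⟨b, rfl⟩ := hm
      exact ⟨a * b, mul_left_comm a e b⟩)

/-- Underlying carrier of the wedge of a family of `A`-sets. -/
def WedgeCarrier {ι : Type u} (Ms : ι → ASet A) : Type u :=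
  Option ((i : ι) × {m : (Ms i).carrier // m ≠ (Ms i).pt})

/-- Action on the wedge carrier. -/
noncomputable def wedgeAct {ι : Type u} (Ms : ι → ASet A) (a : A)
    (x : WedgeCarrier Ms) : WedgeCarrier Ms :=
  x.bind fun p =>
    if h : (Ms p.1).act a p.2.1 = (Ms p.1).pt then none else some ⟨p.1, ⟨_, h⟩⟩

theorem wedgeAct_mul {ι : Type u} (Ms : ι → ASet A) (a b : A) (x : WedgeCarrier Ms) :
    wedgeAct Ms (a * b) x = wedgeAct Ms a (wedgeAct Ms b x) := by
  cases x with
  | none => rfl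
  | some p =>
    obtain ⟨i, m, hm⟩ := p
    simp only [wedgeAct, Option.bind]
    by_cases h1 : (Ms i).act b m = (Ms i).pt
    · rw [dif_pos h1, dif_pos (by rw [(Ms i).act_mul, h1, (Ms i).act_pt])]
    · rw [dif_neg h1]
      simp only [Option.bind]
      by_cases h2 : (Ms i).act a ((Ms i).act b m) = (Ms i).pt
      · rw [dif_pos (by rw [(Ms i).act_mul]; exact h2), dif_pos h2]
      · rw [dif_neg (by rw [(Ms i).act_mul]; exact h2), dif_neg h2]
        simp only [(Ms i).act_mul]
        rfl

/-- The wedge (coproduct) of a family of `A`-sets. -/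
noncomputable def wedge {ι : Type u} (Ms : ι → ASet A) : ASet A where
  carrier := WedgeCarrier Ms
  pt := none
  act := wedgeAct Ms
  act_mul := wedgeAct_mul Ms
  act_pt _ := rfl
  zero_act x := by
    cases x with
    | none => rfl
    | some p =>
      simp only [wedgeAct, Option.bind]
      rw [dif_pos ((Ms p.1).zero_act p.2.1)]
  one_act x := by
    cases x with
    | none => rfl
    | some p =>
      obtain ⟨i, m, hm⟩ := p
      simp only [wedgeAct, Option.bind]
      rw [dif_neg (by rw [(Ms i).one_act]; exact hm)]
      simp only [(Ms i).one_act]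
      rfl

/-- `A`-sets `M` and `N` are isomorphic. -/
def Iso (M N : ASet A) : Prop := ∃ f : ASetHom M N, f.IsIso

/-- The free `A`-set on a (index) type `S`, i.e. `⋁_{s ∈ S} A·s`. -/
noncomputable def free (A : Type u) [CommMonoidWithZero A] (S : Type u) : ASet A :=
  wedge (fun _ : S => ofSelf A)

/-- A projective `A`-set: morphisms out of it lift along every epimorphism. -/
def IsProjective (P : ASet A) : Prop :=
  ∀ (M N : ASet A) (e : ASetHom M N), e.IsEpi →
    ∀ f : ASetHom P N, ∃ g : ASetHom P M, e.comp g = f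

end ASet

namespace ASet

attribute [local instance] Classical.propDecidable

/-- The binary wedge `M ∨ N` of two `A`-sets. -/
noncomputable def wedge2 (M N : ASet A) : ASet A where
  carrier := Option ({m : M.carrier // m ≠ M.pt} ⊕ {n : N.carrier // n ≠ N.pt})
  pt := none
  act a x := x.bind (Sum.elim
    (fun m => if h : M.act a m.1 = M.pt then none else some (.inl ⟨_, h⟩))
    (fun n => if h : N.act a n.1 = N.pt then none else some (.inr ⟨_, h⟩)))
  act_mul a b x := by
    cases x with
    | none => rfl
    | some p =>
      cases p with
      | inl m =>
        simp only [Option.bind, Sum.elim_inl]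
        by_cases h1 : M.act b m.1 = M.pt
        · rw [dif_pos h1, dif_pos (by rw [M.act_mul, h1, M.act_pt])]
        · rw [dif_neg h1]
          simp only [Option.bind, Sum.elim_inl]
          by_cases h2 : M.act a (M.act b m.1) = M.pt
          · rw [dif_pos (by rw [M.act_mul]; exact h2), dif_pos h2]
          · rw [dif_neg (by rw [M.act_mul]; exact h2), dif_neg h2]
            simp only [M.act_mul]
      | inr n =>
        simp only [Option.bind, Sum.elim_inr]
        by_cases h1 : N.act b n.1 = N.pt
        · rw [dif_pos h1, dif_pos (by rw [N.act_mul, h1, N.act_pt])]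
        · rw [dif_neg h1]
          simp only [Option.bind, Sum.elim_inr]
          by_cases h2 : N.act a (N.act b n.1) = N.pt
          · rw [dif_pos (by rw [N.act_mul]; exact h2), dif_pos h2]
          · rw [dif_neg (by rw [N.act_mul]; exact h2), dif_neg h2]
            simp only [N.act_mul]
  act_pt _ := rfl
  zero_act x := by
    cases x with
    | none => rfl
    | some p =>
      cases p with
      | inl m => simp only [Option.bind, Sum.elim_inl]; rw [dif_pos (M.zero_act m.1)]
      | inr n => simp only [Option.bind, Sum.elim_inr]; rw [dif_pos (N.zero_act n.1)]
  one_act x := by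
    cases x with
    | none => rfl
    | some p =>
      cases p with
      | inl m =>
        simp only [Option.bind, Sum.elim_inl]
        rw [dif_neg (by rw [M.one_act]; exact m.2)]
        simp only [M.one_act]
      | inr n =>
        simp only [Option.bind, Sum.elim_inr]
        rw [dif_neg (by rw [N.one_act]; exact n.2)]
        simp only [N.one_act]

/-- The canonical inclusion `M → M ∨ N`. -/
noncomputable def wedge2.inl (M N : ASet A) : ASetHom M (wedge2 M N) where
  toFun m := if h : m = M.pt then none else some (.inl ⟨m, h⟩)
  map_pt := dif_pos rfl
  map_act a m := by
    show (if h : M.act a m = M.pt then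
        (none : Option ({m : M.carrier // m ≠ M.pt} ⊕ {n : N.carrier // n ≠ N.pt}))
        else some (.inl ⟨M.act a m, h⟩)) =
      Option.bind (if h : m = M.pt then
        (none : Option ({m : M.carrier // m ≠ M.pt} ⊕ {n : N.carrier // n ≠ N.pt}))
        else some (.inl ⟨m, h⟩)) (Sum.elim
        (fun (m : {m : M.carrier // m ≠ M.pt}) => if h : M.act a m.1 = M.pt then none else some (.inl ⟨_, h⟩))
        (fun (n : {n : N.carrier // n ≠ N.pt}) =>
          if h : N.act a n.1 = N.pt then none else some (.inr ⟨_, h⟩)))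
    by_cases h : m = M.pt
    · subst h
      rw [dif_pos (M.act_pt a), dif_pos rfl]
      rfl
    · rw [dif_neg h]
      dsimp only [wedge2, Option.bind, Sum.elim_inl]

/-- The canonical projection `M ∨ N → N`. -/
noncomputable def wedge2.snd (M N : ASet A) : ASetHom (wedge2 M N) N where
  toFun x := x.elim N.pt (Sum.elim (fun _ => N.pt) (fun n => n.1))
  map_pt := rfl
  map_act a x := by
    cases x with
    | none => exact (N.act_pt a).symm
    | some p =>
      cases p with
      | inl m =>
        dsimp only [wedge2, Option.bind, Sum.elim_inl]
        by_cases h : M.act a m.1 = M.pt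
        · rw [dif_pos h]
          exact (N.act_pt a).symm
        · rw [dif_neg h]
          exact (N.act_pt a).symm
      | inr n =>
        dsimp only [wedge2, Option.bind, Sum.elim_inr]
        by_cases h : N.act a n.1 = N.pt
        · rw [dif_pos h]
          exact h.symm
        · rw [dif_neg h]
          rfl

end ASet

namespace ASet

/-- The localization relation on `S × M`: `(s,m) ∼ (s',m')` iff `ts.m' = ts'.m` for
some `t ∈ S`. -/
def locRel (S : Submonoid A) (M : ASet A) :
    (S × M.carrier) → (S × M.carrier) → Prop :=
  fun p q => ∃ t : S, M.act (↑t * ↑p.1) q.2 = M.act (↑t * ↑q.1) p.2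

/-- The localization `S⁻¹M` of an `A`-set at a multiplicative subset `S`, with the
`A`-action `a.(m/s) = (a.m)/s`. -/
def loc (S : Submonoid A) (M : ASet A) : ASet A where
  carrier := Quot (locRel S M)
  pt := Quot.mk _ (1, M.pt)
  act a := Quot.lift (fun p => Quot.mk _ (p.1, M.act a p.2)) (by
    rintro ⟨s, m⟩ ⟨s', m'⟩ ⟨t, ht⟩
    dsimp only at ht
    refine Quot.sound ⟨t, ?_⟩
    dsimp only
    rw [← M.act_mul, mul_comm _ a, M.act_mul, ht, ← M.act_mul, mul_comm a, M.act_mul])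
  act_mul a b q := Quot.inductionOn q fun p => by
    show Quot.mk _ (p.1, M.act (a * b) p.2) = Quot.mk _ (p.1, M.act a (M.act b p.2))
    rw [M.act_mul]
  act_pt a := by
    show Quot.mk _ ((1 : S), M.act a M.pt) = Quot.mk _ ((1 : S), M.pt)
    rw [M.act_pt]
  zero_act q := Quot.inductionOn q fun p => by
    show Quot.mk _ (p.1, M.act 0 p.2) = Quot.mk _ ((1 : S), M.pt)
    rw [M.zero_act]
    exact Quot.sound ⟨1, by simp only [M.act_pt]⟩
  one_act q := Quot.inductionOn q fun p => by
    show Quot.mk _ (p.1, M.act 1 p.2) = Quot.mk _ p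
    rw [M.one_act]

end ASet

namespace ASetHom

/-- The localization `S⁻¹f` of a morphism of `A`-sets. -/
def locMap (S : Submonoid A) {M N : ASet A} (f : ASetHom M N) :
    ASetHom (ASet.loc S M) (ASet.loc S N) where
  toFun := Quot.lift (fun p => Quot.mk _ (p.1, f.toFun p.2)) (by
    rintro ⟨s, m⟩ ⟨s', m'⟩ ⟨t, ht⟩
    dsimp only at ht
    refine Quot.sound ⟨t, ?_⟩
    dsimp only
    rw [← f.map_act, ← f.map_act, ht])
  map_pt := by
    show Quot.mk _ ((1 : S), f.toFun M.pt) = Quot.mk _ ((1 : S), N.pt)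
    rw [f.map_pt]
  map_act a q := Quot.inductionOn q fun p => by
    show Quot.mk _ (p.1, f.toFun (M.act a p.2)) = Quot.mk _ (p.1, N.act a (f.toFun p.2))
    rw [f.map_act]

end ASetHom

namespace ASet

/-- The generating relation for the tensor product of two `A`-sets:
`(a.m, n) ∼ (m, a.n)`. -/
def tensorRel (M N : ASet A) :
    (M.carrier × N.carrier) → (M.carrier × N.carrier) → Prop :=
  fun p q => ∃ (a : A) (m : M.carrier) (n : N.carrier),
    p = (M.act a m, n) ∧ q = (m, N.act a n)

/-- The tensor product `M ⊗_A N` of two `A`-sets. -/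
def tensor (M N : ASet A) : ASet A where
  carrier := Quot (tensorRel M N)
  pt := Quot.mk _ (M.pt, N.pt)
  act a := Quot.lift (fun p => Quot.mk _ (M.act a p.1, p.2)) (by
    rintro p q ⟨b, m, n, rfl, rfl⟩
    dsimp only
    rw [← M.act_mul, mul_comm a b, M.act_mul]
    exact Quot.sound ⟨b, M.act a m, n, rfl, rfl⟩)
  act_mul a b q := Quot.inductionOn q fun p => by
    show Quot.mk _ (M.act (a * b) p.1, p.2) = Quot.mk _ (M.act a (M.act b p.1), p.2)
    rw [M.act_mul]
  act_pt a := by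
    show Quot.mk _ (M.act a M.pt, N.pt) = Quot.mk _ (M.pt, N.pt)
    rw [M.act_pt]
  zero_act q := Quot.inductionOn q fun p => by
    show Quot.mk _ (M.act 0 p.1, p.2) = Quot.mk _ (M.pt, N.pt)
    rw [M.zero_act]
    exact Quot.sound ⟨0, M.pt, p.2, by rw [M.zero_act], by rw [N.zero_act]⟩
  one_act q := Quot.inductionOn q fun p => by
    show Quot.mk _ (M.act 1 p.1, p.2) = Quot.mk _ p
    rw [M.one_act]

/-- The product of a family of `A`-sets. -/
def pi {ι : Type u} (Ms : ι → ASet A) : ASet A where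
  carrier := ∀ i, (Ms i).carrier
  pt := fun i => (Ms i).pt
  act a m := fun i => (Ms i).act a (m i)
  act_mul a b m := funext fun i => (Ms i).act_mul a b (m i)
  act_pt a := funext fun i => (Ms i).act_pt a
  zero_act m := funext fun i => (Ms i).zero_act (m i)
  one_act m := funext fun i => (Ms i).one_act (m i)

/-- The linearization `M_ℤ` of an `A`-set: the free abelian group on `M ∖ {∗}`. -/
abbrev lin (M : ASet A) : Type u := {m : M.carrier // m ≠ M.pt} →₀ ℤ

end ASet

namespace ASetHom

attribute [local instance] Classical.propDecidable

/-- The linearization `f_ℤ : M_ℤ → N_ℤ` of a morphism of `A`-sets. -/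
noncomputable def lin {M N : ASet A} (f : ASetHom M N) : M.lin →+ N.lin :=
  Finsupp.liftAddHom fun m =>
    if h : f.toFun m.1 = N.pt then 0 else Finsupp.singleAddHom ⟨f.toFun m.1, h⟩

end ASetHom

namespace ASet

/-- The action of `a ∈ A` on `M`, as a morphism of `A`-sets. -/
def actHom (M : ASet A) (a : A) : ASetHom M M :=
  ⟨M.act a, M.act_pt a, fun b m => by
    rw [← M.act_mul, mul_comm a b, M.act_mul]⟩

/-- The linearization of the action of `a ∈ A` on `M_ℤ`. -/
noncomputable def actLin (M : ASet A) (a : A) : M.lin →+ M.lin := (M.actHom a).lin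

/-- An `A`-set is finitely generated if it is a finite union of orbits `A.mᵢ`. -/
def FG (M : ASet A) : Prop :=
  ∃ s : Finset M.carrier, ∀ m : M.carrier, ∃ g ∈ s, ∃ a : A, m = M.act a g

/-- A subset of an `A`-set is an `A`-subset if it contains the basepoint and is stable
under the action. -/
def IsSubASet (M : ASet A) (N : Set M.carrier) : Prop :=
  M.pt ∈ N ∧ ∀ a : A, ∀ m ∈ N, M.act a m ∈ N

/-- An `A`-subset is finitely generated. -/
def SubFG (M : ASet A) (N : Set M.carrier) : Prop :=
  ∃ s : Finset M.carrier, ↑s ⊆ N ∧ ∀ m ∈ N, ∃ g ∈ s, ∃ a : A, m = M.act a g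

/-- An `A`-set is Noetherian if every `A`-subset is finitely generated. -/
def Noetherian (M : ASet A) : Prop :=
  ∀ N : Set M.carrier, M.IsSubASet N → M.SubFG N

/-- `M_ℤ` is a finitely generated `A_ℤ`-module: there are finitely many elements whose
`A`-translates generate `M_ℤ` as an abelian group. -/
def linFG (M : ASet A) : Prop :=
  ∃ s : Finset M.lin,
    AddSubgroup.closure {y : M.lin | ∃ g ∈ s, ∃ a : A, y = M.actLin a g} = ⊤

end ASet

namespace ASetHom

/-- The kernel of a morphism of `A`-sets, as an `A`-set. -/
def kerASet {M N : ASet A} (f : ASetHom M N) : ASet A :=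
  M.sub f.kerSet f.map_pt f.kerSet_stable

/-- The canonical inclusion `(ker f)_ℤ → M_ℤ`. -/
noncomputable def kerLinIncl {M N : ASet A} (f : ASetHom M N) :
    (f.kerASet).lin →+ M.lin :=
  Finsupp.mapDomain.addMonoidHom fun x =>
    (⟨x.1.1, fun h => x.2 (Subtype.ext h)⟩ : {m : M.carrier // m ≠ M.pt})

/-- `f` is a kernel of `g` (via the concrete description of kernels of `A`-sets). -/
def IsKernelOf {M N P : ASet A} (f : ASetHom M N) (g : ASetHom N P) : Prop :=
  Function.Injective f.toFun ∧ Set.range f.toFun = g.kerSet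

/-- `f` is a cokernel of `g` (via the concrete description `N ≅ M/im g`). -/
def IsCokernelOf {M N P : ASet A} (f : ASetHom M N) (g : ASetHom P M) : Prop :=
  Function.Surjective f.toFun ∧
    ∀ m m', f.toFun m = f.toFun m' ↔
      (m = m' ∨ (m ∈ Set.range g.toFun ∧ m' ∈ Set.range g.toFun))

end ASetHom


/-!
Monomorphisms and epimorphisms of `A`-sets are exactly the injective and surjective
morphisms: `A` is free on the generator `1`, so the orbit maps `a ↦ a • m` separate the points
of `M`, and an epimorphism `f : M → N` cannot tell apart the projection `N → N / im f` from the
zero map, which forces `im f = N`. An injective `f` is then the kernel of `N → N / im f`.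
A cokernel `M → M / im g` only identifies points of `im g`, all of which lie over the basepoint;
conversely a surjection that is injective off the basepoint fibre is the cokernel of the
inclusion of its kernel.
-/

namespace ASet

variable {M : ASet A}

theorem quotRel_equivalence (S : Set M.carrier) : Equivalence (M.quotRel S) where
  refl _ := Or.inl rfl
  symm := by
    rintro _ _ (rfl | ⟨h, h'⟩)
    exacts [Or.inl rfl, Or.inr ⟨h', h⟩]
  trans := by
    rintro _ _ _ (rfl | ⟨h₁, h₂⟩) (rfl | ⟨h₂', h₃⟩)
    exacts [Or.inl rfl, Or.inr ⟨h₂', h₃⟩, Or.inr ⟨h₁, h₂⟩, Or.inr ⟨h₁, h₃⟩]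

theorem quot_mk_eq_quot_mk_iff {S : Set M.carrier} {m m' : M.carrier} :
    Quot.mk (M.quotRel S) m = Quot.mk _ m' ↔ m = m' ∨ (m ∈ S ∧ m' ∈ S) :=
  ⟨fun h => (quotRel_equivalence S).eqvGen_iff.mp (Quot.eqvGen_exact h),
    fun h => Quot.sound h⟩

theorem quot_mk_eq_pt_iff {S : Set M.carrier} (hpt : M.pt ∈ S) {m : M.carrier} :
    Quot.mk (M.quotRel S) m = Quot.mk _ M.pt ↔ m ∈ S := by
  rw [quot_mk_eq_quot_mk_iff]
  exact ⟨by rintro (rfl | ⟨h, -⟩) <;> assumption, fun h => Or.inr ⟨h, hpt⟩⟩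

def quotMk (M : ASet A) (S : Set M.carrier) (hact : ∀ a : A, ∀ m ∈ S, M.act a m ∈ S) :
    ASetHom M (M.quot S hact) :=
  ⟨Quot.mk _, rfl, fun _ _ => rfl⟩

theorem kerSet_quotMk {S : Set M.carrier} (hpt : M.pt ∈ S)
    (hact : ∀ a : A, ∀ m ∈ S, M.act a m ∈ S) : (M.quotMk S hact).kerSet = S :=
  Set.ext fun _ => quot_mk_eq_pt_iff hpt

def orbitHom (M : ASet A) (m : M.carrier) : ASetHom (ofSelf A) M :=
  ⟨fun a => M.act a m, M.zero_act m, fun a b => M.act_mul a b m⟩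

end ASet

namespace ASetHom

variable {M N : ASet A}

def zero (M N : ASet A) : ASetHom M N :=
  ⟨fun _ => N.pt, rfl, fun a _ => (N.act_pt a).symm⟩

def kerIncl (f : ASetHom M N) : ASetHom f.kerASet M :=
  ⟨Subtype.val, rfl, fun _ _ => rfl⟩

theorem range_kerIncl (f : ASetHom M N) : Set.range f.kerIncl.toFun = f.kerSet :=
  Subtype.range_val

theorem range_stable (f : ASetHom M N) :
    ∀ a : A, ∀ n ∈ Set.range f.toFun, N.act a n ∈ Set.range f.toFun := by
  rintro a _ ⟨m, rfl⟩
  exact ⟨M.act a m, f.map_act a m⟩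

theorem pt_mem_range (f : ASetHom M N) : N.pt ∈ Set.range f.toFun :=
  ⟨M.pt, f.map_pt⟩

theorem injective_of_isMono {f : ASetHom M N} (hf : f.IsMono) : Function.Injective f.toFun := by
  intro m m' h
  have horbit : M.orbitHom m = M.orbitHom m' := hf _ _ _ <| ext fun (a : A) =>
    show f.toFun (M.act a m) = f.toFun (M.act a m') by rw [f.map_act, f.map_act, h]
  have hone : M.act 1 m = M.act 1 m' :=
    congrArg (fun g : ASetHom (ASet.ofSelf A) M => g.toFun (1 : A)) horbit
  rwa [M.one_act, M.one_act] at hone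

theorem surjective_of_isEpi {f : ASetHom M N} (hf : f.IsEpi) : Function.Surjective f.toFun := by
  have hproj : N.quotMk _ f.range_stable = zero N _ := hf _ _ _ <| ext fun m =>
    (ASet.quot_mk_eq_pt_iff f.pt_mem_range).mpr ⟨m, rfl⟩
  intro n
  exact (ASet.quot_mk_eq_pt_iff f.pt_mem_range).mp (congrArg (fun g => g.toFun n) hproj)

theorem isKernelOf_quotMk_range {f : ASetHom M N} (hf : Function.Injective f.toFun) :
    f.IsKernelOf (N.quotMk _ f.range_stable) :=
  ⟨hf, (ASet.kerSet_quotMk f.pt_mem_range _).symm⟩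

theorem IsCokernelOf.isNormal {P : ASet A} {f : ASetHom M N} {g : ASetHom P M}
    (h : f.IsCokernelOf g) : f.IsNormal := by
  intro m m' heq hne
  rcases (h.2 m m').mp heq with rfl | ⟨hm, -⟩
  · rfl
  · exact absurd (((h.2 m M.pt).mpr (Or.inr ⟨hm, P.pt, g.map_pt⟩)).trans f.map_pt) hne

theorem isCokernelOf_kerIncl {f : ASetHom M N} (hsurj : Function.Surjective f.toFun)
    (hnorm : f.IsNormal) : f.IsCokernelOf f.kerIncl := by
  refine ⟨hsurj, fun m m' => ?_⟩
  rw [range_kerIncl]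
  constructor
  · intro heq
    by_cases hm : f.toFun m = N.pt
    · exact Or.inr ⟨hm, heq.symm.trans hm⟩
    · exact Or.inl (hnorm m m' heq hm)
  · rintro (rfl | ⟨hm, hm'⟩)
    exacts [rfl, hm.trans hm'.symm]

end ASetHom

/-- In the category of `A`-sets, every monomorphism is normal (a kernel of some
morphism), and an epimorphism is normal (a cokernel of some morphism) if and only if
every fibre other than the fibre of the basepoint contains at most one element. -/
theorem aSetHom_mono_normal_and_epi_normal_iff (A : Type u) [CommMonoidWithZero A] :
    (∀ (M N : ASet A) (f : ASetHom M N), f.IsMono →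
      ∃ (P : ASet A) (g : ASetHom N P), f.IsKernelOf g) ∧
    (∀ (M N : ASet A) (f : ASetHom M N), f.IsEpi →
      ((∃ (P : ASet A) (g : ASetHom P M), f.IsCokernelOf g) ↔ f.IsNormal)) := by
  refine ⟨fun M N f hf => ?_,
    fun M N f hf => ⟨fun ⟨_, _, hcoker⟩ => hcoker.isNormal, fun hnorm => ?_⟩⟩
  · exact ⟨_, _, ASetHom.isKernelOf_quotMk_range (f.injective_of_isMono hf)⟩
  · exact ⟨_, _, ASetHom.isCokernelOf_kerIncl (f.surjective_of_isEpi hf) hnorm⟩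
end
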